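/- arXiv:2004.10913 — 3 statements merged into one kernel-verified Lean document; each statement's English description precedes it below -/
import Mathlib

section
/- Let X be a Hausdorff, connected, locally compact, locally connected topological space. Then every compact subset of X is contained in an open set U such that the closure of U is compact and the complement of the closure of U has only finitely many connected components. -/
open Set

/-- In a Hausdorff, connected, locally compact, locally connected space, every compact
set is contained in an open set with compact closure whose closure has only finitely
many complementary components. -/
theorem stmt_1 {X : Type*} [TopologicalSpace X] [T2Space X] [ConnectedSpace X]
    [LocallyCompactSpace X] [LocallyConnectedSpace X] (K : Set X) (hK : IsCompact K) :
    ∃ U : Set X, IsOpen U ∧ K ⊆ U ∧ IsCompact (closure U) ∧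
      (Set.range fun x : ↥((closure U)ᶜ) => connectedComponentIn ((closure U)ᶜ) x).Finite := by
  obtain ⟨x0⟩ : Nonempty X := inferInstance
  -- choose V open ⊇ K ∪ {x0} with compact closure
  obtain ⟨V, hVopen, hKV, hVc⟩ :=
    exists_isOpen_superset_and_isCompact_closure (hK.union isCompact_singleton)
  -- choose W open ⊇ closure V with compact closure
  obtain ⟨W, hWopen, hVW, hWc⟩ := exists_isOpen_superset_and_isCompact_closure hVc
  set S : Set X := (closure V)ᶜ with hS
  set comp : X → Set X := fun x => connectedComponentIn S x with hcomp
  have hSopen : IsOpen S := isClosed_closure.isOpen_compl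
  have hcompopen : ∀ x, IsOpen (comp x) := fun x => hSopen.connectedComponentIn
  -- frontier-type compact set
  set F : Set X := closure W \ W with hF
  have hFc : IsCompact F := hWc.of_isClosed_subset
    (isClosed_closure.sdiff hWopen) diff_subset
  have hFS : F ⊆ S := fun x hx => fun hxV => hx.2 (hVW hxV)
  -- U₂ : union of components of S avoiding F
  set U2 : Set X := {x | x ∈ S ∧ comp x ∩ F = ∅} with hU2
  have hU2mem : ∀ x ∈ U2, comp x ⊆ U2 := by
    intro x hx y hy
    have hyS : y ∈ S := connectedComponentIn_subset S x hy
    have : comp y = comp x := (connectedComponentIn_eq hy).symm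
    exact ⟨hyS, this ▸ hx.2⟩
  have hU2open : IsOpen U2 := by
    refine isOpen_iff_forall_mem_open.mpr fun x hx => ⟨comp x, hU2mem x hx, hcompopen x, ?_⟩
    exact mem_connectedComponentIn hx.1
  -- each component of S avoiding F is contained in W
  have hcompW : ∀ x ∈ U2, comp x ⊆ W := by
    intro x hx
    have hxS : x ∈ S := hx.1
    have hxc : x ∈ comp x := mem_connectedComponentIn hxS
    have hpre : IsPreconnected (comp x) := isPreconnected_connectedComponentIn
    -- closure of comp x minus comp x is contained in closure V
    have hbd : closure (comp x) \ comp x ⊆ closure V := by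
      intro z hz
      by_contra hzV
      have hzS : z ∈ S := hzV
      have hzc : z ∈ comp z := mem_connectedComponentIn hzS
      have : (comp z ∩ comp x).Nonempty := by
        rcases mem_closure_iff.mp hz.1 (comp z) (hcompopen z) hzc with ⟨w, hw1, hw2⟩
        exact ⟨w, hw1, hw2⟩
      obtain ⟨w, hw1, hw2⟩ := this
      have : comp z = comp x :=
        (connectedComponentIn_eq hw1).trans (connectedComponentIn_eq hw2).symm
      exact hz.2 (this ▸ hzc)
    -- comp x is not closed (else clopen, hence X, but x0 ∉ S)
    have hne : (closure (comp x) \ comp x).Nonempty := by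
      rcases eq_empty_or_nonempty (closure (comp x) \ comp x) with h | h
      · exfalso
        have hclosed : IsClosed (comp x) := by
          have : closure (comp x) ⊆ comp x := by
            intro z hz
            by_contra hzc
            exact (eq_empty_iff_forall_notMem.mp h z) ⟨hz, hzc⟩
          exact isClosed_of_closure_subset this
        have hclopen : IsClopen (comp x) := ⟨hclosed, hcompopen x⟩
        rcases isClopen_iff.mp hclopen with h0 | h0
        · exact (h0 ▸ hxc : x ∈ (∅ : Set X))
        · have : x0 ∈ comp x := h0 ▸ mem_univ x0
          have hx0S : x0 ∈ S := connectedComponentIn_subset S x this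
          exact hx0S (subset_closure (hKV (Or.inr rfl)))
      · exact h
    obtain ⟨z, hz⟩ := hne
    have hzW : z ∈ W := hVW (hbd hz)
    have hWmeets : (comp x ∩ W).Nonempty := by
      rcases mem_closure_iff.mp hz.1 W hWopen hzW with ⟨w, hw1, hw2⟩
      exact ⟨w, hw2, hw1⟩
    -- comp x ⊆ W ∪ (closure W)ᶜ, connectedness forces comp x ⊆ W
    by_contra hnotW
    obtain ⟨y, hyc, hyW⟩ := not_subset.mp hnotW
    have hcover : comp x ⊆ W ∪ (closure W)ᶜ := by
      intro a ha
      by_cases haW : a ∈ W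
      · exact Or.inl haW
      · right
        intro hacl
        have haF : a ∈ F := ⟨hacl, haW⟩
        have : a ∈ comp x ∩ F := ⟨ha, haF⟩
        exact (eq_empty_iff_forall_notMem.mp hx.2 a) this
    have hyWc : y ∈ (closure W)ᶜ := (hcover hyc).resolve_left hyW
    have := hpre W (closure W)ᶜ hWopen isClosed_closure.isOpen_compl hcover
      ⟨hWmeets.choose, hWmeets.choose_spec.1, hWmeets.choose_spec.2⟩ ⟨y, hyc, hyWc⟩
    obtain ⟨a, _, haW, haWc⟩ := this
    exact haWc (subset_closure haW)
  -- the open set U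
  refine ⟨V ∪ U2, hVopen.union hU2open, fun x hx => Or.inl (hKV (Or.inl hx)), ?_, ?_⟩
  · -- compact closure: V ∪ U2 ⊆ W
    have hsub : V ∪ U2 ⊆ W := by
      rintro x (hx | hx)
      · exact hVW (subset_closure hx)
      · exact hcompW x hx (mem_connectedComponentIn hx.1)
    exact hWc.of_isClosed_subset isClosed_closure (closure_mono hsub)
  · -- finitely many complementary components
    set U : Set X := V ∪ U2 with hU
    -- closure U ⊆ closure V ∪ U2
    have hclU : closure U ⊆ closure V ∪ U2 := by
      intro z hz
      by_cases hzV : z ∈ closure V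
      · exact Or.inl hzV
      · right
        have hzS : z ∈ S := hzV
        have hzc : z ∈ comp z := mem_connectedComponentIn hzS
        rcases mem_closure_iff.mp hz (comp z) (hcompopen z) hzc with ⟨w, hw1, hw2⟩
        rcases hw2 with hwV | hwU2
        · exact absurd (subset_closure hwV)
            (connectedComponentIn_subset S z hw1 : w ∈ S)
        · refine hU2mem w hwU2 ?_
          show z ∈ connectedComponentIn S w
          rw [← connectedComponentIn_eq hw1]
          exact hzc
    -- cover F by finitely many components
    have hFcov : F ⊆ ⋃ y ∈ F, comp y := fun y hy =>
      mem_biUnion hy (mem_connectedComponentIn (hFS hy))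
    obtain ⟨t, htF, htcov⟩ := hFc.elim_nhds_subcover comp
      (fun y hy => (hcompopen y).mem_nhds (mem_connectedComponentIn (hFS hy)))
    -- each complementary component of closure U equals comp z and comes from t
    apply Set.Finite.subset ((t.finite_toSet).image comp)
    rintro _ ⟨⟨z, hzU⟩, rfl⟩
    have hzU' : z ∉ closure U := hzU
    have hclVU : closure V ⊆ closure U := closure_mono subset_union_left
    have hzS : z ∈ S := fun h => hzU' (hclVU h)
    have hzc : z ∈ comp z := mem_connectedComponentIn hzS
    have hcompF : (comp z ∩ F).Nonempty := by
      rcases eq_empty_or_nonempty (comp z ∩ F) with h | h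
      · have hzU2 : z ∈ U := Or.inr ⟨hzS, h⟩
        exact absurd (subset_closure hzU2) hzU'
      · exact h
    have hcompU : comp z ⊆ (closure U)ᶜ := by
      intro y hy hyU
      have hyS : y ∈ S := connectedComponentIn_subset S z hy
      rcases hclU hyU with h | h
      · exact hyS h
      · have : comp y = comp z := (connectedComponentIn_eq hy).symm
        exact hcompF.ne_empty (this ▸ h.2)
    have hkey : connectedComponentIn ((closure U)ᶜ) z = comp z := by
      apply Subset.antisymm
      · exact isPreconnected_connectedComponentIn.subset_connectedComponentIn
          (mem_connectedComponentIn hzU')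
          (fun y hy hyV => (connectedComponentIn_subset _ _ hy) (hclVU hyV))
      · exact isPreconnected_connectedComponentIn.subset_connectedComponentIn hzc hcompU
    obtain ⟨w, hwc, hwF⟩ := hcompF
    obtain ⟨y, hyt, hwy⟩ := mem_iUnion₂.mp (htcov hwF)
    refine ⟨y, hyt, ?_⟩
    show connectedComponentIn S y = connectedComponentIn ((closure U)ᶜ) z
    rw [hkey]
    exact (connectedComponentIn_eq hwy).trans (connectedComponentIn_eq hwc).symm
end

section
/- The closed long ray ω₁ × [0,1) with the lexicographic order topology is ω-bounded: every countable subset has compact closure. -/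
/-!
A lexicographic product of conditionally complete linear orders with bottom elements is again
conditionally complete as soon as the first factor has successors: if `a` is the supremum of the
first coordinates of `s`, the supremum of `s` is `(a, b)` with `b` the supremum of the fibre of `s`
over `a`, or `(succ a, ⊥)` when that fibre is unbounded. Hence closed intervals of the long ray
are compact. As `ω₁` is regular, a countable set of countable ordinals is bounded below `ω₁`, so a
countable subset of the long ray lies, together with its closure, in some interval `[⊥, b]`.
-/

/-- The closed long ray: ω₁ × [0,1) with the lexicographic order. -/
def LongRay : Type 1 :=
  ↥(Set.Iio (Cardinal.aleph 1).ord) ×ₗ ↥(Set.Ico (0 : ℝ) 1)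

noncomputable instance : LinearOrder LongRay :=
  inferInstanceAs (LinearOrder (↥(Set.Iio (Cardinal.aleph 1).ord) ×ₗ ↥(Set.Ico (0 : ℝ) 1)))

noncomputable instance : TopologicalSpace LongRay := Preorder.topology LongRay

instance : OrderTopology LongRay := ⟨rfl⟩

open Set

namespace Prod.Lex

variable {α β : Type*}

section LinearOrder

variable [LinearOrder α] [LinearOrder β] {s : Set (α ×ₗ β)} {a : α}

theorem le_fst_of_mem_upperBounds (ha : IsLUB ((fun x ↦ (ofLex x).1) '' s) a)
    {u : α ×ₗ β} (hu : u ∈ upperBounds s) : a ≤ (ofLex u).1 :=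
  ha.2 (monotone_fst_ofLex.mem_upperBounds_image hu)

theorem snd_mem_upperBounds_fiber {u : α × β} (hu : toLex u ∈ upperBounds s) :
    u.2 ∈ upperBounds ((fun b ↦ toLex (u.1, b)) ⁻¹' s) :=
  fun _ hb ↦ by simpa using toLex_le_toLex.1 (hu hb)

theorem isLUB_toLex (ha : IsLUB ((fun x ↦ (ofLex x).1) '' s) a) {b : β}
    (hb : IsLUB ((fun b ↦ toLex (a, b)) ⁻¹' s) b) : IsLUB s (toLex (a, b)) := by
  refine ⟨toLex.surjective.forall.2 fun x hx ↦ ?_, toLex.surjective.forall.2 fun u hu ↦ ?_⟩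
  · exact toLex_le_toLex'.2
      ⟨ha.1 ⟨_, hx, rfl⟩, fun (h : x.1 = a) ↦ hb.1 (by rwa [← h])⟩
  · exact toLex_le_toLex'.2 ⟨le_fst_of_mem_upperBounds ha hu,
      fun (h : a = u.1) ↦ hb.2 (h ▸ snd_mem_upperBounds_fiber hu)⟩

theorem toLex_bot_le_iff [OrderBot β] {x : α ×ₗ β} : toLex (a, ⊥) ≤ x ↔ a ≤ (ofLex x).1 :=
  ⟨monotone_fst _ _, fun h ↦ toLex_le_toLex'.2 ⟨h, fun _ ↦ bot_le⟩⟩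

theorem isLUB_toLex_succ [SuccOrder α] [OrderBot β] (hs : BddAbove s)
    (ha : IsLUB ((fun x ↦ (ofLex x).1) '' s) a)
    (hb : ¬BddAbove ((fun b ↦ toLex (a, b)) ⁻¹' s)) : IsLUB s (toLex (Order.succ a, ⊥)) := by
  have lt_fst : ∀ u ∈ upperBounds s, a < (ofLex u).1 :=
    toLex.surjective.forall.2 fun u hu ↦ (le_fst_of_mem_upperBounds ha hu).lt_of_ne fun h ↦
      hb ⟨u.2, h ▸ snd_mem_upperBounds_fiber hu⟩
  obtain ⟨u, hu⟩ := hs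
  have lt_succ : a < Order.succ a :=
    Order.lt_succ_of_not_isMax (not_isMax_of_lt (lt_fst u hu))
  refine ⟨fun x hx ↦ ?_, fun v hv ↦ toLex_bot_le_iff.2 (Order.succ_le_of_lt (lt_fst v hv))⟩
  exact (toLex_lt_toLex.2 (Or.inl ((ha.1 ⟨x, hx, rfl⟩).trans_lt lt_succ))).le

theorem bddAbove_of_bddAbove_fst [NoMaxOrder α] [Nonempty β]
    (hs : BddAbove ((fun x ↦ (ofLex x).1) '' s)) : BddAbove s := by
  obtain ⟨a, ha⟩ := hs
  obtain ⟨a', ha'⟩ := exists_gt a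
  obtain ⟨b⟩ := ‹Nonempty β›
  exact ⟨toLex (a', b), fun x hx ↦
    (toLex_lt_toLex.2 (Or.inl ((ha ⟨x, hx, rfl⟩).trans_lt ha'))).le⟩

end LinearOrder

theorem exists_isLUB [ConditionallyCompleteLinearOrder α] [SuccOrder α]
    [ConditionallyCompleteLinearOrder β] [OrderBot β] {s : Set (α ×ₗ β)} (hne : s.Nonempty)
    (hs : BddAbove s) : ∃ x, IsLUB s x := by
  have ha := isLUB_csSup (hne.image _) (monotone_fst_ofLex.map_bddAbove hs)
  set fiber := (fun b ↦ toLex (sSup ((fun x ↦ (ofLex x).1) '' s), b)) ⁻¹' s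
  by_cases hfiber : BddAbove fiber
  · rcases fiber.eq_empty_or_nonempty with hempty | hne
    · exact ⟨_, isLUB_toLex ha (hempty ▸ isLUB_empty)⟩
    · exact ⟨_, isLUB_toLex ha (isLUB_csSup hne hfiber)⟩
  · exact ⟨_, isLUB_toLex_succ hs ha hfiber⟩

variable [ConditionallyCompleteLinearOrder α] [OrderBot α] [SuccOrder α]
  [ConditionallyCompleteLinearOrder β] [OrderBot β]

open Classical in
noncomputable instance : SupSet (α ×ₗ β) :=
  ⟨fun s ↦ if h : s.Nonempty ∧ BddAbove s then (exists_isLUB h.1 h.2).choose else ⊥⟩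

noncomputable instance conditionallyCompleteLinearOrder :
    ConditionallyCompleteLinearOrder (α ×ₗ β) where
  __ := Prod.Lex.instLinearOrder α β
  __ := conditionallyCompleteLatticeOfLatticeOfsSup (α ×ₗ β) fun s hs hne ↦ by
    simp only [sSup, dif_pos (And.intro hne hs)]
    exact (exists_isLUB hne hs).choose_spec
  csSup_of_not_bddAbove s hs := by simp [sSup, hs]
  csInf_of_not_bddBelow s hs := (hs (OrderBot.bddBelow s)).elim

end Prod.Lex

namespace Cardinal

universe u

theorem isSuccLimit_ord_aleph_one : Order.IsSuccLimit (aleph 1).ord :=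
  isSuccLimit_ord (aleph0_le_aleph 1)

theorem bddAbove_countable_Iio_ord_aleph_one {s : Set (Iio (aleph.{u} 1).ord)}
    (hs : s.Countable) : BddAbove s := by
  have := hs.to_subtype
  have hsup : ⨆ x : s, x.1.1 < (aleph.{u} 1).ord :=
    (Ordinal.iSup_lt_omega_one fun x ↦ x.1.2.trans_eq (ord_aleph 1)).trans_eq (ord_aleph 1).symm
  exact ⟨⟨_, hsup⟩, fun x hx ↦ le_ciSup Ordinal.bddAbove_of_small (⟨x, hx⟩ : s)⟩

instance : OrderBot (Iio (aleph 1).ord) where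
  bot := ⟨⊥, isSuccLimit_ord_aleph_one.bot_lt⟩
  bot_le x := bot_le (a := x.1)

noncomputable instance : ConditionallyCompleteLinearOrderBot (Iio (aleph 1).ord) :=
  WellFoundedLT.conditionallyCompleteLinearOrderBot _

instance : NoMaxOrder (Iio (aleph 1).ord) :=
  isSuccLimit_ord_aleph_one.isSuccPrelimit.noMaxOrder_Iio

end Cardinal

namespace LongRay

noncomputable instance : Inhabited (Ico (0 : ℝ) 1) := ⟨⊥⟩

noncomputable instance : ConditionallyCompleteLinearOrder LongRay :=
  inferInstanceAs <|
    ConditionallyCompleteLinearOrder (Iio (Cardinal.aleph 1).ord ×ₗ Ico (0 : ℝ) 1)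

instance : OrderBot LongRay :=
  inferInstanceAs <| OrderBot (Iio (Cardinal.aleph 1).ord ×ₗ Ico (0 : ℝ) 1)

end LongRay

/-- The closed long ray is ω-bounded: every countable subset has compact closure. -/
theorem stmt_12 (A : Set LongRay) (hA : A.Countable) : IsCompact (closure A) := by
  obtain ⟨b, hb⟩ : BddAbove A :=
    Prod.Lex.bddAbove_of_bddAbove_fst (Cardinal.bddAbove_countable_Iio_ord_aleph_one (hA.image _))
  exact isCompact_Icc.of_isClosed_subset isClosed_closure
    (closure_minimal (fun x hx ↦ ⟨bot_le, hb hx⟩) isClosed_Icc)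
end

section
/- Let T be a tree (a partial order in which the set of strict predecessors of each element is well-ordered) of height ω₁ in which every element has countable height and every level is nonempty. If every chain of T is countable, then for every countable subset X of T there exists an element of T not in the closure of X with respect to the tree topology; in particular T with the tree topology is not separable. -/
/-- The height of a node of a tree: the order type of its set of strict predecessors. -/
noncomputable def treeHeight {T : Type*} [PartialOrder T]
    (hwo : ∀ t : T, IsWellOrder {s // s < t} (· < ·)) (t : T) : Ordinal :=
  @Ordinal.type {s // s < t} (· < ·) (hwo t)

/-- The upward cone of a node. -/
def upCone {T : Type*} [PartialOrder T] (t : T) : Set T := {x | t ≤ x}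

/-- The tree topology: generated by the upward cones at nodes of successor height
together with their complements. -/
noncomputable def treeTopology {T : Type*} [PartialOrder T]
    (hwo : ∀ t : T, IsWellOrder {s // s < t} (· < ·)) : TopologicalSpace T :=
  TopologicalSpace.generateFrom
    {S | ∃ t : T, (∃ a, treeHeight hwo t = a + 1) ∧ (S = upCone t ∨ S = (upCone t)ᶜ)}
/-!
The heights of the nodes of a countable set `X` are countably many countable ordinals, so by
regularity of `ω₁` they are all bounded by some `α < ω₁`. A node `t` of height `α + 1` then lies
strictly above every height occurring in `X`, so the clopen cone `t↑` contains `t` and misses `X`.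
-/

universe u

theorem exists_bound_lt_ord_aleph_one_of_countable {ι : Type u} (f : ι → Ordinal.{u})
    (hf : ∀ i, f i < (Cardinal.aleph 1).ord) {X : Set ι} (hX : X.Countable) :
    ∃ α < (Cardinal.aleph 1).ord, ∀ x ∈ X, f x ≤ α := by
  refine ⟨⨆ x : X, f x, Ordinal.iSup_lt_of_lt_cof ?_ fun x => hf x, fun x hx =>
    le_ciSup (f := fun x : X => f x) Ordinal.bddAbove_of_small ⟨x, hx⟩⟩
  rw [Cardinal.isRegular_aleph_one.cof_ord, Cardinal.lt_aleph_one_iff]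
  exact Cardinal.le_aleph0_iff_set_countable.mpr hX

section TreeTopology

variable {T : Type*} [PartialOrder T] (hwo : ∀ t : T, IsWellOrder {s // s < t} (· < ·))

theorem treeHeight_strictMono : StrictMono (treeHeight hwo) := by
  intro s t hst
  let := hwo s
  let := hwo t
  exact PrincipalSeg.ordinal_type_lt
    { toFun := fun x => ⟨x.1, x.2.trans hst⟩
      inj' := fun x y hxy => Subtype.ext (congrArg Subtype.val hxy :)
      map_rel_iff' := Iff.rfl
      top := ⟨s, hst⟩
      mem_range_iff_rel' := fun x => ⟨by rintro ⟨y, rfl⟩; exact y.2, fun hx => ⟨⟨x.1, hx⟩, rfl⟩⟩ }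

variable {hwo}

theorem isOpen_upCone {t : T} {α : Ordinal} (ht : treeHeight hwo t = α + 1) :
    @IsOpen T (treeTopology hwo) (upCone t) :=
  TopologicalSpace.GenerateOpen.basic _ ⟨t, ⟨α, ht⟩, Or.inl rfl⟩

theorem notMem_closure_of_forall_treeHeight_lt {X : Set T} {t : T} {α : Ordinal}
    (ht : treeHeight hwo t = α + 1) (hX : ∀ x ∈ X, treeHeight hwo x < treeHeight hwo t) :
    t ∉ @closure T (treeTopology hwo) X := by
  let := treeTopology hwo
  have hX_compl : X ⊆ (upCone t)ᶜ := fun x hx htx =>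
    (hX x hx).not_ge ((treeHeight_strictMono hwo).monotone htx)
  exact fun ht_mem => closure_minimal hX_compl (isOpen_upCone ht).isClosed_compl ht_mem le_rfl

end TreeTopology

theorem stmt_14_general {T : Type*} [PartialOrder T]
    (hwo : ∀ t : T, IsWellOrder {s // s < t} (· < ·))
    (hht : ∀ t : T, treeHeight hwo t < (Cardinal.aleph 1).ord)
    (hlevels : ∀ α : Ordinal, α < (Cardinal.aleph 1).ord → ∃ t : T, treeHeight hwo t = α) :
    (∀ X : Set T, X.Countable → ∃ t : T, t ∉ @closure T (treeTopology hwo) X) ∧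
      ¬ ∃ D : Set T, D.Countable ∧ @Dense T (treeTopology hwo) D := by
  have main (X : Set T) (hX : X.Countable) : ∃ t : T, t ∉ @closure T (treeTopology hwo) X := by
    obtain ⟨α, hα, hXα⟩ := exists_bound_lt_ord_aleph_one_of_countable _ hht hX
    have hα_succ : α + 1 < (Cardinal.aleph 1).ord :=
      (Cardinal.isSuccLimit_ord (Cardinal.aleph0_le_aleph 1)).succ_lt hα
    obtain ⟨t, ht⟩ := hlevels (α + 1) hα_succ
    refine ⟨t, notMem_closure_of_forall_treeHeight_lt ht fun x hx => ?_⟩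
    rw [ht]
    exact Order.lt_add_one_iff.mpr (hXα x hx)
  exact ⟨main, fun ⟨D, hD, hDense⟩ => (main D hD).elim fun t ht => ht (hDense t)⟩

/-- In a tree of height ω₁ with every node of countable height, all levels nonempty,
and only countable chains, no countable subset is dense in the tree topology: every
countable subset omits some node from its closure. Hence T is not separable. -/
theorem stmt_14 {T : Type*} [PartialOrder T]
    (hwo : ∀ t : T, IsWellOrder {s // s < t} (· < ·))
    (hht : ∀ t : T, treeHeight hwo t < (Cardinal.aleph 1).ord)
    (hlevels : ∀ α : Ordinal, α < (Cardinal.aleph 1).ord → ∃ t : T, treeHeight hwo t = α)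
    (hchain : ∀ C : Set T, IsChain (· ≤ ·) C → C.Countable) :
    (∀ X : Set T, X.Countable → ∃ t : T, t ∉ @closure T (treeTopology hwo) X) ∧
      ¬ ∃ D : Set T, D.Countable ∧ @Dense T (treeTopology hwo) D :=
  stmt_14_general hwo hht hlevels
end
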